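/- Let d be a positive integer and A ∈ ℝ^{d×d}. Then the maximum of O ↦ tr(A Oᵀ) over the orthogonal group O(d) is attained and equals tr((AᵀA)^{1/2}), the sum of the singular values (nuclear norm) of A. Moreover, if A is invertible, the maximizer is unique, namely the orthogonal polar factor A (AᵀA)^{−1/2} of A. -/

import Mathlib

open Matrix

/-- Squared Frobenius norm of a real matrix: `‖A‖_F² = tr(Aᵀ A)`. -/
noncomputable def frobSq {m n : Type*} [Fintype m] [Fintype n] (A : Matrix m n ℝ) : ℝ :=
  Matrix.trace (Aᵀ * A)

/-- `O ∈ O(d)`: a real orthogonal matrix. -/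
def IsOrth {d : ℕ} (O : Matrix (Fin d) (Fin d) ℝ) : Prop :=
  O * Oᵀ = 1 ∧ Oᵀ * O = 1

/-- `L ∈ 𝕃`: block-lower triangular w.r.t. `T` blocks of size `d`
(indices are pairs `(i, t)` with `i : Fin d` the within-block index and `t : Fin T`
the block index); the block `L_{t,s}` vanishes for `t < s`. -/
def BlockLT {d T : ℕ} (L : Matrix (Fin d × Fin T) (Fin d × Fin T) ℝ) : Prop :=
  ∀ p q : Fin d × Fin T, p.2 < q.2 → L p q = 0

/-- `O ∈ 𝕆`: block-diagonal with orthogonal `d × d` diagonal blocks. -/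
def BlockOrth {d T : ℕ} (O : Matrix (Fin d × Fin T) (Fin d × Fin T) ℝ) : Prop :=
  ∃ f : Fin T → Matrix (Fin d) (Fin d) ℝ, (∀ t, IsOrth (f t)) ∧ O = Matrix.blockDiagonal f

/-- Truncated `t`-th column `L̃_t ∈ ℝ^{(T−t)d×d}` (0-based `t`): the rows of the `t`-th block
column of `L` from block row `t` on. -/
def truncCol {d T : ℕ} (L : Matrix (Fin d × Fin T) (Fin d × Fin T) ℝ) (t : Fin T) :
    Matrix (Fin (T - t.val) × Fin d) (Fin d) ℝ :=
  fun p j => L (p.2, ⟨t.val + p.1.val, by have := p.1.isLt; omega⟩) (j, t)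

/-- Column covariance `Σ̃_t^L = L̃_t L̃_tᵀ`. -/
noncomputable def colCov {d T : ℕ} (L : Matrix (Fin d × Fin T) (Fin d × Fin T) ℝ) (t : Fin T) :
    Matrix (Fin (T - t.val) × Fin d) (Fin (T - t.val) × Fin d) ℝ :=
  truncCol L t * (truncCol L t)ᵀ

/-- The positive semidefinite square root of a PSD matrix (junk value `0` otherwise). -/
noncomputable def sqrtPSD {n : Type*} [Fintype n] [DecidableEq n] (P : Matrix n n ℝ) :
    Matrix n n ℝ :=
  by classical exact if h : P.PosSemidef then
    h.1.eigenvectorUnitary.1 * Matrix.diagonal ((↑) ∘ Real.sqrt ∘ h.1.eigenvalues) *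
      (star h.1.eigenvectorUnitary : Matrix n n ℝ) else 0

/-- The Bures–Wasserstein distance between (PSD) matrices. -/
noncomputable def dBW {n : Type*} [Fintype n] [DecidableEq n] (S1 S2 : Matrix n n ℝ) : ℝ :=
  Real.sqrt (Matrix.trace S1 + Matrix.trace S2 -
    2 * Matrix.trace (sqrtPSD (sqrtPSD S2 * S1 * sqrtPSD S2)))

variable {d : ℕ}

def colE (M : Matrix (Fin d) (Fin d) ℝ) (i : Fin d) : EuclideanSpace ℝ (Fin d) :=
  WithLp.toLp 2 (fun j => M j i)

lemma inner_colE (M N : Matrix (Fin d) (Fin d) ℝ) (i j : Fin d) :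
    (inner ℝ (colE M i) (colE N j) : ℝ) = (Mᵀ * N) i j := by
  simp [colE, PiLp.inner_apply, Matrix.mul_apply, Matrix.transpose_apply,
    RCLike.inner_apply, starRingEnd_apply, mul_comm]

lemma norm_colE (M : Matrix (Fin d) (Fin d) ℝ) (i : Fin d) :
    ‖colE M i‖ = Real.sqrt ((Mᵀ * M) i i) := by
  rw [← inner_colE M M i i, real_inner_self_eq_norm_sq, Real.sqrt_sq (norm_nonneg _)]

/-- The maximum of `O ↦ tr(AOᵀ)` over `O(d)` is attained and equals
`tr((AᵀA)^{1/2})`, the nuclear norm of `A`; if moreover `A` is invertible, the maximizer is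
unique, namely the orthogonal polar factor `A(AᵀA)^{-1/2}`. -/
theorem stmt12 (d : ℕ) (hd : 0 < d) (A : Matrix (Fin d) (Fin d) ℝ) :
    IsGreatest {x : ℝ | ∃ O, IsOrth O ∧ x = Matrix.trace (A * Oᵀ)}
      (Matrix.trace (sqrtPSD (Aᵀ * A))) ∧
    (IsUnit A.det →
      ∀ O, IsOrth O → Matrix.trace (A * Oᵀ) = Matrix.trace (sqrtPSD (Aᵀ * A)) →
        O = A * (sqrtPSD (Aᵀ * A))⁻¹) := by
  classical
  have hAA : (Aᵀ * A).PosSemidef := by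
    have := Matrix.posSemidef_conjTranspose_mul_self A
    rwa [Matrix.conjTranspose_eq_transpose_of_trivial] at this
  have hH : (Aᵀ * A).IsHermitian := hAA.1
  set V : Matrix (Fin d) (Fin d) ℝ := (hH.eigenvectorUnitary : Matrix (Fin d) (Fin d) ℝ) with hVdef
  set μ : Fin d → ℝ := hH.eigenvalues with hμdef
  have hμ0 : ∀ i, 0 ≤ μ i := fun i => hAA.eigenvalues_nonneg i
  have hVmem := hH.eigenvectorUnitary.2
  rw [Matrix.mem_unitaryGroup_iff] at hVmem
  have hV2 : V * Vᵀ = 1 := by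
    rw [← hVmem, hVdef]
    rfl
  have hV1 : Vᵀ * V = 1 := mul_eq_one_comm.mp hV2
  have spec : Aᵀ * A = V * Matrix.diagonal μ * Vᵀ := by
    have := hH.spectral_theorem
    simpa [Matrix.star_eq_conjTranspose, Matrix.conjTranspose_eq_transpose_of_trivial,
      Function.comp] using this
  set σ : Fin d → ℝ := fun i => Real.sqrt (μ i) with hσdef
  have hσ0 : ∀ i, 0 ≤ σ i := fun i => Real.sqrt_nonneg _
  set P : Matrix (Fin d) (Fin d) ℝ := V * Matrix.diagonal σ * Vᵀ with hPdef
  have hPpsd : P.PosSemidef := by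
    have h1 : (Matrix.diagonal σ).PosSemidef := Matrix.posSemidef_diagonal_iff.mpr hσ0
    have := h1.mul_mul_conjTranspose_same V
    rwa [Matrix.conjTranspose_eq_transpose_of_trivial] at this
  have hPsq : P ^ 2 = Aᵀ * A := by
    rw [pow_two, hPdef]
    calc V * Matrix.diagonal σ * Vᵀ * (V * Matrix.diagonal σ * Vᵀ)
        = V * Matrix.diagonal σ * ((Vᵀ * V) * (Matrix.diagonal σ * Vᵀ)) := by
          simp only [Matrix.mul_assoc]
      _ = V * (Matrix.diagonal σ * Matrix.diagonal σ) * Vᵀ := by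
          rw [hV1, one_mul]; simp only [Matrix.mul_assoc]
      _ = V * Matrix.diagonal μ * Vᵀ := by
          rw [Matrix.diagonal_mul_diagonal,
            show (fun i => σ i * σ i) = μ from funext fun i => Real.mul_self_sqrt (hμ0 i)]
      _ = Aᵀ * A := spec.symm
  have hsq : sqrtPSD (Aᵀ * A) = P := by
    simp only [sqrtPSD]
    rw [dif_pos hAA]
    rfl
  have htrP : Matrix.trace (sqrtPSD (Aᵀ * A)) = ∑ i, σ i := by
    rw [hsq, hPdef, Matrix.trace_mul_cycle, hV1, one_mul,
      Matrix.trace_diagonal]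
  have hAVAV : (A * V)ᵀ * (A * V) = Matrix.diagonal μ := by
    rw [Matrix.transpose_mul]
    calc Vᵀ * Aᵀ * (A * V) = Vᵀ * (Aᵀ * A) * V := by simp only [Matrix.mul_assoc]
      _ = (Vᵀ * V) * Matrix.diagonal μ * (Vᵀ * V) := by rw [spec]; simp only [Matrix.mul_assoc]
      _ = Matrix.diagonal μ := by rw [hV1, one_mul, mul_one]
  have hnormAV : ∀ i, ‖colE (A * V) i‖ = σ i := fun i => by
    rw [norm_colE, hAVAV, Matrix.diagonal_apply_eq]
  have hkey : ∀ O : Matrix (Fin d) (Fin d) ℝ, IsOrth O →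
      Matrix.trace (A * Oᵀ) = ∑ i, (inner ℝ (colE (O * V) i) (colE (A * V) i) : ℝ) := by
    intro O hO
    have h1 : (O * V)ᵀ * (A * V) = Vᵀ * (Oᵀ * A) * V := by
      rw [Matrix.transpose_mul]; simp only [Matrix.mul_assoc]
    have h2 : Matrix.trace (Vᵀ * (Oᵀ * A) * V) = Matrix.trace (A * Oᵀ) := by
      rw [Matrix.trace_mul_cycle, ← Matrix.mul_assoc, hV2, one_mul, Matrix.trace_mul_comm]
    calc Matrix.trace (A * Oᵀ) = Matrix.trace ((O * V)ᵀ * (A * V)) := by rw [h1, h2]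
      _ = ∑ i, ((O * V)ᵀ * (A * V)) i i := by rw [Matrix.trace]; rfl
      _ = ∑ i, (inner ℝ (colE (O * V) i) (colE (A * V) i) : ℝ) := by
          simp only [inner_colE]
  have hOVnorm : ∀ O : Matrix (Fin d) (Fin d) ℝ, IsOrth O → ∀ i, ‖colE (O * V) i‖ = 1 := by
    intro O hO i
    have h3 : (O * V)ᵀ * (O * V) = 1 := by
      rw [Matrix.transpose_mul]
      calc Vᵀ * Oᵀ * (O * V) = Vᵀ * (Oᵀ * O) * V := by simp only [Matrix.mul_assoc]
        _ = 1 := by rw [hO.2, mul_one, hV1]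
    rw [norm_colE, h3, Matrix.one_apply_eq, Real.sqrt_one]
  have hub : ∀ O : Matrix (Fin d) (Fin d) ℝ, IsOrth O →
      Matrix.trace (A * Oᵀ) ≤ Matrix.trace (sqrtPSD (Aᵀ * A)) := by
    intro O hO
    rw [hkey O hO, htrP]
    refine Finset.sum_le_sum fun i _ => ?_
    calc (inner ℝ (colE (O * V) i) (colE (A * V) i) : ℝ)
        ≤ ‖colE (O * V) i‖ * ‖colE (A * V) i‖ := real_inner_le_norm _ _
      _ = σ i := by rw [hOVnorm O hO i, hnormAV i, one_mul]
  -- attainment: construct orthogonal polar factor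
  set sσ : Set (Fin d) := {i | σ i ≠ 0} with hsdef
  set v : Fin d → EuclideanSpace ℝ (Fin d) := fun i => (σ i)⁻¹ • colE (A * V) i with hvdef
  have hinnerv : ∀ i j, (inner ℝ (v i) (v j) : ℝ)
      = (σ i)⁻¹ * ((σ j)⁻¹ * (Matrix.diagonal μ i j)) := by
    intro i j
    rw [hvdef]
    simp only
    rw [real_inner_smul_left, real_inner_smul_right, inner_colE, hAVAV]
  have hon : Orthonormal ℝ (sσ.restrict v) := by
    rw [orthonormal_iff_ite]
    rintro ⟨i, hi⟩ ⟨j, hj⟩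
    change (inner ℝ (v i) (v j) : ℝ) = _
    rw [hinnerv]
    by_cases h : i = j
    · subst h
      rw [if_pos rfl, Matrix.diagonal_apply_eq]
      have hμeq : μ i = σ i * σ i := (Real.mul_self_sqrt (hμ0 i)).symm
      have hσi : σ i ≠ 0 := hi
      rw [hμeq]
      field_simp
    · rw [Matrix.diagonal_apply_ne _ h, if_neg (by simpa [Subtype.ext_iff] using h)]
      ring
  obtain ⟨b, hb⟩ := hon.exists_orthonormalBasis_extension_of_card_eq
    (by simp [finrank_euclideanSpace])
  set U : Matrix (Fin d) (Fin d) ℝ := Matrix.of fun j i => b i j with hUdef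
  have hinnerb : ∀ i j, (inner ℝ (b i) (b j) : ℝ) = ∑ k, b i k * b j k := fun i j => by
    simp [PiLp.inner_apply, starRingEnd_apply, mul_comm]
  have hU1 : Uᵀ * U = 1 := by
    ext i j
    have h4 := orthonormal_iff_ite.mp b.orthonormal i j
    rw [hinnerb] at h4
    rw [Matrix.mul_apply]
    simp only [hUdef, Matrix.transpose_apply, Matrix.of_apply]
    rw [h4, Matrix.one_apply]
  have hU2 : U * Uᵀ = 1 := mul_eq_one_comm.mp hU1
  have hAVU : A * V = U * Matrix.diagonal σ := by
    ext j i
    rw [Matrix.mul_diagonal]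
    by_cases h : σ i = 0
    · have hμi : μ i = 0 := by
        rw [← Real.mul_self_sqrt (hμ0 i), show Real.sqrt (μ i) = σ i from rfl, h, mul_zero]
      have hsum : ∑ k, (A * V) k i * (A * V) k i = μ i := by
        have h7 := congrFun (congrFun hAVAV i) i
        rw [Matrix.diagonal_apply_eq] at h7
        rw [← h7, Matrix.mul_apply]
        simp [Matrix.transpose_apply]
      have hzero := (Finset.sum_eq_zero_iff_of_nonneg
        (fun k _ => mul_self_nonneg ((A * V) k i))).mp (by rw [hsum, hμi]) j (Finset.mem_univ j)
      rw [mul_self_eq_zero.mp hzero, h, mul_zero]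
    · have hb' : b i = v i := hb i h
      have hU' : U j i = (σ i)⁻¹ * (A * V) j i := by
        simp only [hUdef, Matrix.of_apply, hb', hvdef]
        rfl
      rw [hU']
      field_simp
  -- the maximizing orthogonal matrix
  have hOrth0 : IsOrth (U * Vᵀ) := by
    constructor
    · rw [Matrix.transpose_mul, Matrix.transpose_transpose, Matrix.mul_assoc U Vᵀ (V * Uᵀ),
        ← Matrix.mul_assoc Vᵀ V Uᵀ, hV1, one_mul, hU2]
    · rw [Matrix.transpose_mul, Matrix.transpose_transpose, Matrix.mul_assoc V Uᵀ (U * Vᵀ),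
        ← Matrix.mul_assoc Uᵀ U Vᵀ, hU1, one_mul, hV2]
  have hattain : Matrix.trace (sqrtPSD (Aᵀ * A)) = Matrix.trace (A * (U * Vᵀ)ᵀ) := by
    rw [htrP, Matrix.transpose_mul, Matrix.transpose_transpose, ← Matrix.mul_assoc, hAVU,
      Matrix.trace_mul_cycle, hU1, one_mul, Matrix.trace_diagonal]
  refine ⟨⟨⟨U * Vᵀ, hOrth0, hattain⟩, ?_⟩, ?_⟩
  · rintro x ⟨O, hO, rfl⟩
    exact hub O hO
  -- uniqueness
  intro hdet O hO htr
  have hdetAA : (Aᵀ * A).det ≠ 0 := by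
    rw [Matrix.det_mul, Matrix.det_transpose]
    exact mul_ne_zero hdet.ne_zero hdet.ne_zero
  have hμne : ∀ i, μ i ≠ 0 := by
    intro i hzero
    apply hdetAA
    rw [hH.det_eq_prod_eigenvalues]
    simpa using Finset.prod_eq_zero (Finset.mem_univ i) (by simpa using hzero)
  have hσpos : ∀ i, 0 < σ i :=
    fun i => Real.sqrt_pos.mpr (lt_of_le_of_ne (hμ0 i) (Ne.symm (hμne i)))
  have hsum2 : ∑ i, (inner ℝ (colE (O * V) i) (colE (A * V) i) : ℝ) = ∑ i, σ i := by
    rw [← hkey O hO, htr, htrP]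
  have hle2 : ∀ i ∈ Finset.univ, (inner ℝ (colE (O * V) i) (colE (A * V) i) : ℝ) ≤ σ i := by
    intro i _
    calc (inner ℝ (colE (O * V) i) (colE (A * V) i) : ℝ)
        ≤ ‖colE (O * V) i‖ * ‖colE (A * V) i‖ := real_inner_le_norm _ _
      _ = σ i := by rw [hOVnorm O hO i, hnormAV i, one_mul]
  have heq2 : ∀ i, (inner ℝ (colE (O * V) i) (colE (A * V) i) : ℝ) = σ i :=
    fun i => (Finset.sum_eq_sum_iff_of_le hle2).mp hsum2 i (Finset.mem_univ i)
  have hcols : ∀ i, colE (A * V) i = σ i • colE (O * V) i := by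
    intro i
    have h5 : (inner ℝ (colE (O * V) i) (colE (A * V) i) : ℝ)
        = ‖colE (O * V) i‖ * ‖colE (A * V) i‖ := by
      rw [heq2 i, hOVnorm O hO i, hnormAV i, one_mul]
    have h6 := inner_eq_norm_mul_iff_real.mp h5
    rw [hnormAV i, hOVnorm O hO i, one_smul] at h6
    exact h6.symm
  have hAVOV : A * V = (O * V) * Matrix.diagonal σ := by
    ext j i
    rw [Matrix.mul_diagonal]
    have h7 := congrArg (fun x => x j) (hcols i)
    simpa [colE, mul_comm] using h7
  have hOA : Oᵀ * A = P := by
    have h8 : A = O * V * Matrix.diagonal σ * Vᵀ := by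
      have h9 : A * V * Vᵀ = O * V * Matrix.diagonal σ * Vᵀ := by rw [hAVOV]
      rwa [Matrix.mul_assoc, hV2, mul_one] at h9
    rw [h8, hPdef]
    calc Oᵀ * (O * V * Matrix.diagonal σ * Vᵀ)
        = (Oᵀ * O) * (V * Matrix.diagonal σ * Vᵀ) := by simp only [Matrix.mul_assoc]
      _ = V * Matrix.diagonal σ * Vᵀ := by rw [hO.2, one_mul]
  have hPdetne : P.det ≠ 0 := by
    have hdV : V.det * V.det = 1 := by
      have h10 := congrArg Matrix.det hV1
      rwa [Matrix.det_mul, Matrix.det_transpose, Matrix.det_one] at h10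
    have h11 : P.det = ∏ i, σ i := by
      rw [hPdef, Matrix.det_mul, Matrix.det_mul, Matrix.det_diagonal, Matrix.det_transpose]
      calc V.det * (∏ i, σ i) * V.det = (V.det * V.det) * ∏ i, σ i := by ring
        _ = ∏ i, σ i := by rw [hdV, one_mul]
    rw [h11]
    exact Finset.prod_ne_zero_iff.mpr fun i _ => (hσpos i).ne'
  have hAOP : A = O * P := by
    rw [← hOA, ← Matrix.mul_assoc, hO.1, one_mul]
  rw [hsq, hAOP, Matrix.mul_assoc, Matrix.mul_nonsing_inv P (isUnit_iff_ne_zero.mpr hPdetne),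
    mul_one]
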